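/- arXiv:2003.01701 — 3 statements merged into one kernel-verified Lean document; each statement's English description precedes it below -/
import Mathlib

section
/- Let R(s) = Σ_{i=1}^n R_i(s) e^{-h_i s} where each R_i is a rational function with real coefficients, bounded and analytic on the closed right half-plane, with 0 ≤ h_1 < h_2 < ⋯ < h_n, and suppose the relative degree d_1 of R_1 equals max{d_2,…,d_n} (neutral type) and R_1 is not identically zero. Set ξ_i = lim_{ω→∞} R_i(jω)/R_1(jω) for i = 2,…,n. If the polynomial φ(r) = 1 + Σ_{i=2}^n ξ_i r^{h_i − h_1} (where all h_i are assumed to be nonnegative integers) has all its roots of modulus strictly greater than 1, then there exists σ_0 > 0 and ω_0 > 0 such that R(σ + jω) ≠ 0 for all 0 ≤ σ ≤ σ_0 and |ω| ≥ ω_0. -/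
/-!
Put `r = e^{-s}`, so that `‖r‖ ≤ 1` when `Re s ≥ 0`. Then
`R(s) = R₁(s) e^{-h₁ s} (1 + ∑_{i ≥ 2} (Rᵢ/R₁)(s) r^{hᵢ - h₁})`.
A rational function with a finite limit along the imaginary axis has the same limit as
`|s| → ∞` in all of `ℂ` (compare degrees), so `Rᵢ/R₁ → ξᵢ` at infinity. As `φ` has no zero on
the closed unit disc, `‖φ‖ ≥ c > 0` there, and the bracket cannot vanish once
`∑ ‖Rᵢ/R₁ - ξᵢ‖ < c`. This holds on the whole half-plane `Re s ≥ 0` away from a ball.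
-/

open Complex Polynomial Filter Finset

/-- The `i`-th rational term `R_i(s) = p_i(s)/q_i(s)` viewed as a function on `ℂ`. -/
noncomputable def ratTerm {n : ℕ} (p q : Fin n → Polynomial ℝ) (i : Fin n) (s : ℂ) : ℂ :=
  ((p i).map (algebraMap ℝ ℂ)).eval s / ((q i).map (algebraMap ℝ ℂ)).eval s

/-- The delay system `R(s) = ∑ᵢ R_i(s) e^{-h_i s}` with integer delays. -/
noncomputable def delaySys {n : ℕ} (p q : Fin n → Polynomial ℝ) (h : Fin n → ℕ) (s : ℂ) : ℂ :=
  ∑ i : Fin n, ratTerm p q i s * Complex.exp (-(h i : ℂ) * s)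

open Bornology Topology Asymptotics

namespace Polynomial

variable {𝕜 : Type*} [NormedField 𝕜] {P Q : 𝕜[X]}

lemma eventually_cobounded_eval_ne_zero (hP : P ≠ 0) : ∀ᶠ z in cobounded 𝕜, P.eval z ≠ 0 :=
  isBounded_def.mp (finite_setOfPred_isRoot hP).isBounded

lemma tendsto_eval_div_eval_cobounded_of_degree_lt (h : P.degree < Q.degree) :
    Tendsto (fun z => P.eval z / Q.eval z) (cobounded 𝕜) (𝓝 0) :=
  (isLittleO_cobounded_of_degree_lt h).tendsto_div_nhds_zero

lemma tendsto_eval_div_eval_cobounded_of_degree_eq (h : P.degree = Q.degree) :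
    Tendsto (fun z => P.eval z / Q.eval z) (cobounded 𝕜)
      (𝓝 (P.leadingCoeff / Q.leadingCoeff)) := by
  refine (isEquivalent_cobounded_leading_monomial.div
    isEquivalent_cobounded_leading_monomial).symm.tendsto_nhds (tendsto_const_nhds.congr' ?_)
  filter_upwards [eventually_ne_cobounded 0] with z hz
  simp [natDegree_eq_natDegree h, mul_div_mul_right, hz]

lemma tendsto_eval_div_eval_cobounded_of_tendsto {α : Type*} {l : Filter α} [l.NeBot]
    {f : α → 𝕜} (hf : Tendsto f l (cobounded 𝕜)) (hQ : Q ≠ 0) {L : 𝕜}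
    (hL : Tendsto (fun x => P.eval (f x) / Q.eval (f x)) l (𝓝 L)) :
    Tendsto (fun z => P.eval z / Q.eval z) (cobounded 𝕜) (𝓝 L) := by
  rcases lt_trichotomy P.degree Q.degree with hlt | heq | hgt
  · have h0 := tendsto_eval_div_eval_cobounded_of_degree_lt hlt
    rwa [tendsto_nhds_unique hL (h0.comp hf)]
  · have h0 := tendsto_eval_div_eval_cobounded_of_degree_eq heq
    rwa [tendsto_nhds_unique hL (h0.comp hf)]
  · exfalso
    have hP : P ≠ 0 := ne_zero_of_degree_gt hgt
    have h0 := (tendsto_eval_div_eval_cobounded_of_degree_lt hgt).comp hf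
    have h1 : Tendsto (fun x => P.eval (f x) / Q.eval (f x) * (Q.eval (f x) / P.eval (f x)))
        l (𝓝 1) := by
      refine tendsto_const_nhds.congr' ?_
      filter_upwards [hf.eventually (eventually_cobounded_eval_ne_zero hP),
        hf.eventually (eventually_cobounded_eval_ne_zero hQ)] with x hPx hQx
      field_simp
    exact one_ne_zero (tendsto_nhds_unique h1 (by simpa using hL.mul h0))

end Polynomial

lemma Complex.tendsto_I_mul_ofReal_atTop_cobounded :
    Tendsto (fun ω : ℝ => I * ω) atTop (cobounded ℂ) :=
  tendsto_norm_atTop_iff_cobounded.mp (tendsto_abs_atTop_atTop.congr fun ω => by simp)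

lemma Complex.exists_forall_le_abs_im_of_eventually_cobounded {P : ℂ → Prop}
    (hP : ∀ᶠ s in cobounded ℂ, P s) : ∃ ω₀ > 0, ∀ s : ℂ, ω₀ ≤ |s.im| → P s := by
  rw [← comap_norm_atTop, eventually_comap, eventually_atTop] at hP
  obtain ⟨R, hR⟩ := hP
  exact ⟨max R 1, by positivity, fun s hs =>
    hR ‖s‖ ((le_max_left _ _).trans (hs.trans (abs_im_le_norm s))) s rfl⟩

lemma IsCompact.exists_pos_forall_le_norm {X F : Type*} [TopologicalSpace X]
    [NormedAddCommGroup F] {K : Set X} {f : X → F} (hK : IsCompact K) (hf : ContinuousOn f K)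
    (hf0 : ∀ x ∈ K, f x ≠ 0) : ∃ c > 0, ∀ x ∈ K, c ≤ ‖f x‖ := by
  rcases K.eq_empty_or_nonempty with rfl | hne
  · exact ⟨1, one_pos, by simp⟩
  obtain ⟨x₀, hx₀, hmin⟩ := hK.exists_isMinOn hne hf.norm
  exact ⟨‖f x₀‖, norm_pos_iff.mpr (hf0 x₀ hx₀), fun x hx => hmin hx⟩

lemma one_add_sum_mul_pow_ne_zero {𝕜 ι : Type*} [NormedField 𝕜] (S : Finset ι) (k : ι → ℕ)
    {ξ g : ι → 𝕜} {r : 𝕜} (hr : ‖r‖ ≤ 1)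
    (hclose : ∑ i ∈ S, ‖g i - ξ i‖ < ‖1 + ∑ i ∈ S, ξ i * r ^ k i‖) :
    1 + ∑ i ∈ S, g i * r ^ k i ≠ 0 := by
  intro h0
  have hdiff : 1 + ∑ i ∈ S, ξ i * r ^ k i = -∑ i ∈ S, (g i - ξ i) * r ^ k i := by
    simp only [sub_mul, sum_sub_distrib]
    linear_combination h0
  have : ‖1 + ∑ i ∈ S, ξ i * r ^ k i‖ ≤ ∑ i ∈ S, ‖g i - ξ i‖ :=
    calc ‖1 + ∑ i ∈ S, ξ i * r ^ k i‖ = ‖∑ i ∈ S, (g i - ξ i) * r ^ k i‖ := by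
          rw [hdiff, norm_neg]
      _ ≤ ∑ i ∈ S, ‖(g i - ξ i) * r ^ k i‖ := norm_sum_le _ _
      _ ≤ ∑ i ∈ S, ‖g i - ξ i‖ := sum_le_sum fun i _ => by
          rw [norm_mul, norm_pow]
          exact mul_le_of_le_one_right (norm_nonneg _) (pow_le_one₀ (norm_nonneg _) hr)
  linarith

section DelaySystem

variable {n : ℕ} {p q : Fin n → ℝ[X]}

lemma ratTerm_div_ratTerm (i j : Fin n) (s : ℂ) :
    ratTerm p q i s / ratTerm p q j s =
      ((p i * q j).map (algebraMap ℝ ℂ)).eval s / ((q i * p j).map (algebraMap ℝ ℂ)).eval s := by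
  simp only [ratTerm, Polynomial.map_mul, eval_mul, div_div_div_eq]

lemma tendsto_ratTerm_div_ratTerm_cobounded {i j : Fin n} (hq : q i ≠ 0) (hp : p j ≠ 0) {L : ℂ}
    (hL : Tendsto (fun ω : ℝ => ratTerm p q i (I * ω) / ratTerm p q j (I * ω)) atTop (𝓝 L)) :
    Tendsto (fun s => ratTerm p q i s / ratTerm p q j s) (cobounded ℂ) (𝓝 L) := by
  simp only [ratTerm_div_ratTerm] at hL ⊢
  exact tendsto_eval_div_eval_cobounded_of_tendsto tendsto_I_mul_ofReal_atTop_cobounded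
    (Polynomial.map_ne_zero (mul_ne_zero hq hp)) hL

lemma eventually_cobounded_ratTerm_ne_zero {i : Fin n} (hp : p i ≠ 0) (hq : q i ≠ 0) :
    ∀ᶠ s in cobounded ℂ, ratTerm p q i s ≠ 0 := by
  filter_upwards [eventually_cobounded_eval_ne_zero (Polynomial.map_ne_zero hp),
    eventually_cobounded_eval_ne_zero (Polynomial.map_ne_zero hq)] with s hps hqs
  exact div_ne_zero hps hqs

lemma delaySys_eq_mul_one_add_sum {h : Fin n → ℕ} {i0 : Fin n} (hh : ∀ i, h i0 ≤ h i) {s : ℂ}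
    (hs : ratTerm p q i0 s ≠ 0) :
    delaySys p q h s = ratTerm p q i0 s * exp (-(h i0 : ℂ) * s) *
      (1 + ∑ i ∈ univ.erase i0, ratTerm p q i s / ratTerm p q i0 s * exp (-s) ^ (h i - h i0)) := by
  have hterm : ∀ i, ratTerm p q i s * exp (-(h i : ℂ) * s) = ratTerm p q i0 s *
      exp (-(h i0 : ℂ) * s) * (ratTerm p q i s / ratTerm p q i0 s * exp (-s) ^ (h i - h i0)) := by
    intro i
    rw [← exp_nat_mul, Nat.cast_sub (hh i), mul_mul_mul_comm, mul_div_cancel₀ _ hs, ← exp_add]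
    ring_nf
  rw [delaySys, sum_congr rfl fun i _ => hterm i, ← mul_sum, ← add_sum_erase _ _ (mem_univ i0),
    div_self hs, Nat.sub_self, pow_zero, one_mul]

end DelaySystem

theorem stmt1_general (n : ℕ) (hn : 0 < n) (p q : Fin n → Polynomial ℝ) (h : Fin n → ℕ)
    (i0 : Fin n) (hi0 : i0 = ⟨0, hn⟩)
    (hmono : StrictMono h)
    (hstable : ∀ i, ∀ z : ℂ, 0 ≤ z.re → ((q i).map (algebraMap ℝ ℂ)).eval z ≠ 0)
    (hp1 : p i0 ≠ 0)
    (ξ : Fin n → ℂ)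
    (hξ : ∀ i, Tendsto (fun ω : ℝ => ratTerm p q i (Complex.I * ω) /
        ratTerm p q i0 (Complex.I * ω)) atTop (nhds (ξ i)))
    (hφ : ∀ r : ℂ, 1 + ∑ i ∈ Finset.univ.erase i0, ξ i * r ^ (h i - h i0) = 0 →
        1 < ‖r‖) :
    ∃ σ₀ > (0 : ℝ), ∃ ω₀ > (0 : ℝ), ∀ σ ω : ℝ, 0 ≤ σ → σ ≤ σ₀ → ω₀ ≤ |ω| →
      delaySys p q h (σ + Complex.I * ω) ≠ 0 := by
  have hh : ∀ i, h i0 ≤ h i := fun i => hmono.monotone (by simp [hi0, Fin.le_def])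
  have hq : ∀ i, q i ≠ 0 := fun i hqi => hstable i 0 le_rfl (by simp [hqi])
  obtain ⟨c, hc, hφc⟩ := (isCompact_closedBall (0 : ℂ) 1).exists_pos_forall_le_norm
    (f := fun r => 1 + ∑ i ∈ univ.erase i0, ξ i * r ^ (h i - h i0)) (by fun_prop)
    fun r hr h0 => (hφ r h0).not_ge (by simpa using hr)
  have hclose : Tendsto (fun s => ∑ i ∈ univ.erase i0,
      ‖ratTerm p q i s / ratTerm p q i0 s - ξ i‖) (cobounded ℂ) (𝓝 0) := by
    simpa only [sub_self, norm_zero, sum_const_zero] using tendsto_finsetSum _ fun i _ =>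
      ((tendsto_ratTerm_div_ratTerm_cobounded (hq i) hp1 (hξ i)).sub_const (ξ i)).norm
  obtain ⟨ω₀, hω₀, hfar⟩ := exists_forall_le_abs_im_of_eventually_cobounded
    ((eventually_cobounded_ratTerm_ne_zero hp1 (hq i0)).and (hclose.eventually (gt_mem_nhds hc)))
  refine ⟨1, one_pos, ω₀, hω₀, fun σ ω hσ _ hω => ?_⟩
  obtain ⟨hs0, hsclose⟩ := hfar (σ + I * ω) (by simpa using hω)
  have hr : ‖exp (-(σ + I * ω))‖ ≤ 1 := by simpa [norm_exp] using hσ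
  rw [delaySys_eq_mul_one_add_sum hh hs0]
  exact mul_ne_zero (mul_ne_zero hs0 (exp_ne_zero _)) (one_add_sum_mul_pow_ne_zero _ _ hr
    (hsclose.trans_le (hφc _ (by simpa using hr))))

/-- for a neutral-type delay system whose associated polynomial
`φ(r) = 1 + ∑_{i≥2} ξ_i r^{h_i - h_1}` has all roots of modulus `> 1`, the zeros of `R`
avoid the part of the strip `0 ≤ Re s ≤ σ₀` with `|Im s| ≥ ω₀`. -/
theorem stmt1 (n : ℕ) (hn : 0 < n) (p q : Fin n → Polynomial ℝ) (h : Fin n → ℕ)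
    (i0 : Fin n) (hi0 : i0 = ⟨0, hn⟩)
    (hmono : StrictMono h)
    (hstable : ∀ i, ∀ z : ℂ, 0 ≤ z.re → ((q i).map (algebraMap ℝ ℂ)).eval z ≠ 0)
    (hproper : ∀ i, (p i).natDegree ≤ (q i).natDegree)
    (hp1 : p i0 ≠ 0)
    (d : Fin n → ℕ) (hd : ∀ i, d i = (q i).natDegree - (p i).natDegree)
    (hneutral : d i0 = (Finset.univ.erase i0).sup d)
    (ξ : Fin n → ℂ)
    (hξ : ∀ i, Tendsto (fun ω : ℝ => ratTerm p q i (Complex.I * ω) /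
        ratTerm p q i0 (Complex.I * ω)) atTop (nhds (ξ i)))
    (hφ : ∀ r : ℂ, 1 + ∑ i ∈ Finset.univ.erase i0, ξ i * r ^ (h i - h i0) = 0 →
        1 < ‖r‖) :
    ∃ σ₀ > (0 : ℝ), ∃ ω₀ > (0 : ℝ), ∀ σ ω : ℝ, 0 ≤ σ → σ ≤ σ₀ → ω₀ ≤ |ω| →
      delaySys p q h (σ + Complex.I * ω) ≠ 0 :=
  stmt1_general n hn p q h i0 hi0 hmono hstable hp1 ξ hξ hφ
end

section
/- Let F(s) = Σ_{i=1}^n F_i(s) e^{-h_i s} where 0 ≤ h_1 < ⋯ < h_n, each F_i is a strictly proper rational function all of whose poles lie in the finite set {z_1,…,z_{n_z}} ⊂ ℂ of distinct points, and suppose that for each k, Σ_{i=1}^n Res_{s=z_k}(F_i(s)) · e^{-h_i z_k} = 0. Then the inverse Laplace transform f(t) = Σ_{i=1}^n Σ_{k=1}^{n_z} Res_{s=z_k}(F_i(s)) · e^{z_k (t − h_i)} · u(t − h_i) (for simple poles) vanishes identically for all t > h_n. -/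
open Complex

/-- core computation of the FIR lemma: with residues
`c i k = Res_{s=z_k} F_i(s)` at the simple poles `z_1,…,z_{n_z}`, if the residue
cancellation condition `∑ᵢ c i k · e^{-h_i z_k} = 0` holds for every `k`, then the inverse
Laplace transform `f(t) = ∑ᵢ ∑ₖ c i k · e^{z_k (t - h_i)} · u(t - h_i)` vanishes for all
`t > h_n`.  Here `u` is the unit step. -/
theorem stmt3 (n nz : ℕ) (h : Fin n → ℝ) (hpos : ∀ i, 0 ≤ h i)
    (hmono : StrictMono h)
    (z : Fin nz → ℂ) (hz : Function.Injective z)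
    (c : Fin n → Fin nz → ℂ)
    (hres : ∀ k : Fin nz, ∑ i : Fin n, c i k * Complex.exp (-(h i : ℂ) * z k) = 0)
    (u : ℝ → ℝ) (hu : ∀ t : ℝ, u t = if 0 ≤ t then 1 else 0)
    (hn : 0 < n) :
    ∀ t : ℝ, h ⟨n - 1, Nat.sub_lt hn one_pos⟩ < t →
      ∑ i : Fin n, ∑ k : Fin nz,
        c i k * Complex.exp (z k * ((t : ℂ) - (h i : ℂ))) * (u (t - h i) : ℂ) = 0 := by
  intro t ht
  have hle : ∀ i : Fin n, h i < t := by
    intro i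
    have : h i ≤ h ⟨n - 1, Nat.sub_lt hn one_pos⟩ := by
      apply hmono.monotone
      exact Fin.le_def.mpr (Nat.le_sub_one_of_lt i.isLt)
    linarith
  have hu1 : ∀ i : Fin n, (u (t - h i) : ℂ) = 1 := by
    intro i
    rw [hu]
    simp [le_of_lt (sub_pos.mpr (hle i))]
  calc ∑ i : Fin n, ∑ k : Fin nz,
        c i k * Complex.exp (z k * ((t : ℂ) - (h i : ℂ))) * (u (t - h i) : ℂ)
      = ∑ k : Fin nz, Complex.exp (z k * t) *
          ∑ i : Fin n, c i k * Complex.exp (-(h i : ℂ) * z k) := by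
        rw [Finset.sum_comm]
        refine Finset.sum_congr rfl fun k _ => ?_
        rw [Finset.mul_sum]
        refine Finset.sum_congr rfl fun i _ => ?_
        rw [hu1 i, mul_one, mul_sub, sub_eq_add_neg, Complex.exp_add, ← neg_mul]
        ring
    _ = 0 := by
        have h2 := hres
        simp only [neg_mul] at h2
        simp [h2]
end

section
/- The quasi-polynomial r_p(s) = (s+3) + 2(s−1)e^{-0.4 s} has infinitely many zeros in the open right half-plane; moreover there is a sequence of zeros s_k with Re(s_k) → (5/2)·ln 2 and Im(s_k) → −∞. -/
/-!
Away from the real axis, `r_p(s) = 0` is equivalent to `exp (2s/5) = -ρ(s)` for the Möbius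
factor `ρ(s) = 2(s-1)/(s+3)` (`ratio`), which is within `8/|s+3|` of `2`. Taking the logarithm on
the branch shifted by `(2n+1)πi`, the zeros near `c_n = (5/2)(log 2 + (2n+1)πi)` are the fixed
points of `s ↦ (5/2) log ρ(s) + (5/2)(2n+1)πi` (`logMap θ` for `θ = (5/2)(2n+1)π`). For `|n|`
large this map sends the closed unit disc about `c_n` into itself and contracts it (`ρ'` is
`O(|s|⁻²)`), so Banach's theorem gives a zero `s_n` there, with `|s_n - c_n| = O(1/|n|)`.
Letting `n → -∞` yields the sequence of zeros.
-/

open Complex Filter Metric Set Topology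
open scoped NNReal

theorem exists_isFixedPt_of_lipschitzOnWith {α : Type*} [MetricSpace α] [CompleteSpace α]
    {f : α → α} {s : Set α} {K : ℝ≥0} (hK : K < 1) (hs : IsClosed s) (hne : s.Nonempty)
    (hsf : MapsTo f s s) (hf : LipschitzOnWith K f s) : ∃ x ∈ s, Function.IsFixedPt f x := by
  obtain ⟨x, hx⟩ := hne
  obtain ⟨y, hy, hfix, -⟩ := ContractingWith.exists_fixedPoint' hs.isComplete hsf
    ⟨hK, hf.mapsToRestrict hsf⟩ hx (edist_ne_top _ _)
  exact ⟨y, hy, hfix⟩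

theorem Set.infinite_of_tendsto_atBot {ι α β : Type*} [Preorder β] [Nonempty β] [NoMinOrder β]
    {l : Filter ι} [l.NeBot] {S : Set α} {f : ι → α} {g : α → β} (hS : ∀ i, f i ∈ S)
    (hg : Tendsto (g ∘ f) l atBot) : S.Infinite := by
  refine Set.Infinite.of_image g (Set.infinite_of_forall_exists_lt fun b => ?_)
  obtain ⟨i, hi⟩ := (hg.eventually (eventually_lt_atBot b)).exists
  exact ⟨g (f i), mem_image_of_mem g (hS i), hi⟩

theorem Complex.lipschitzOnWith_log {U : Set ℂ} {δ : ℝ≥0} (hU : Convex ℝ U) (hδ : 0 < δ)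
    (hre : ∀ z ∈ U, δ ≤ z.re) : LipschitzOnWith δ⁻¹ log U := by
  have hpos (z : ℂ) (hz : z ∈ U) : 0 < z.re := (NNReal.coe_pos.mpr hδ).trans_le (hre z hz)
  refine hU.lipschitzOnWith_of_nnnorm_hasDerivWithin_le (f' := fun z => z⁻¹)
    (fun z hz => (hasDerivAt_log (.inl (hpos z hz))).hasDerivWithinAt) fun z hz => ?_
  rw [← NNReal.coe_le_coe, coe_nnnorm, norm_inv, NNReal.coe_inv]
  exact inv_anti₀ hδ ((hre z hz).trans (re_le_norm z))

theorem Complex.exp_odd_mul_pi_mul_I (n : ℤ) : exp ((2 * n + 1) * (Real.pi * I)) = -1 := by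
  rw [show (2 * n + 1) * (Real.pi * I) = n * (2 * Real.pi * I) + Real.pi * I by ring, exp_add,
    exp_int_mul_two_pi_mul_I, exp_pi_mul_I, one_mul]

namespace QuasiPolynomialZeros

noncomputable def rp (s : ℂ) : ℂ := (s + 3) + 2 * (s - 1) * exp (-(0.4 : ℂ) * s)

noncomputable def ratio (s : ℂ) : ℂ := 2 * (s - 1) / (s + 3)

theorem rp_eq_zero_of_exp_eq {s : ℂ} (hs : s + 3 ≠ 0) (h : exp (2 / 5 * s) = -ratio s) :
    rp s = 0 := by
  have hinv : exp (-(0.4 : ℂ) * s) * exp (2 / 5 * s) = 1 := by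
    rw [← exp_add]; norm_num
  have hratio : ratio s * (s + 3) = 2 * (s - 1) := div_mul_cancel₀ _ hs
  rw [h] at hinv
  unfold rp
  linear_combination (-exp (-(0.4 : ℂ) * s)) * hratio - (s + 3) * hinv

theorem norm_ratio_sub_two {s : ℂ} (hs : s + 3 ≠ 0) : ‖ratio s - 2‖ = 8 / ‖s + 3‖ := by
  rw [show ratio s - 2 = -8 / (s + 3) by rw [ratio]; field_simp; ring, norm_div]
  norm_num

theorem norm_ratio_sub_ratio {s t : ℂ} (hs : s + 3 ≠ 0) (ht : t + 3 ≠ 0) :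
    ‖ratio s - ratio t‖ = 8 * ‖s - t‖ / (‖s + 3‖ * ‖t + 3‖) := by
  rw [show ratio s - ratio t = 8 * (s - t) / ((s + 3) * (t + 3)) by
    rw [ratio, ratio]; field_simp; ring, norm_div, norm_mul, norm_mul]
  norm_num

noncomputable def center (θ : ℝ) : ℂ := 5 / 2 * log 2 + θ * I

noncomputable def logMap (θ : ℝ) (s : ℂ) : ℂ := 5 / 2 * log (ratio s) + θ * I

theorem center_re (θ : ℝ) : (center θ).re = 5 / 2 * Real.log 2 := by
  simp [center, log_re]

theorem center_im (θ : ℝ) : (center θ).im = θ := by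
  simp [center, log_im]

variable {θ : ℝ} {s : ℂ}

theorem abs_im_sub_le_one (hs : s ∈ closedBall (center θ) 1) : |s.im - θ| ≤ 1 := by
  simpa only [sub_im, center_im] using (abs_im_le_norm _).trans (mem_closedBall_iff_norm.mp hs)

theorem sub_one_le_norm_add_three (hs : s ∈ closedBall (center θ) 1) :
    |θ| - 1 ≤ ‖s + 3‖ := by
  have h3 : |(s + 3).im| ≤ ‖s + 3‖ := abs_im_le_norm _
  norm_num at h3
  linarith [abs_im_sub_le_one hs, abs_sub_abs_le_abs_sub θ s.im, abs_sub_comm s.im θ]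

-- `21 ≤ |θ|` is what makes `logMap θ` map the unit disc into itself: `(5/2) * 8 / 20 = 1`.
theorem twenty_le_norm_add_three (hθ : 21 ≤ |θ|) (hs : s ∈ closedBall (center θ) 1) :
    20 ≤ ‖s + 3‖ := by
  linarith [sub_one_le_norm_add_three hs]

theorem ratio_mem_closedBall (hθ : 21 ≤ |θ|) (hs : s ∈ closedBall (center θ) 1) :
    ratio s ∈ closedBall 2 1 := by
  have h20 := twenty_le_norm_add_three hθ hs
  rw [mem_closedBall_iff_norm, norm_ratio_sub_two (norm_pos_iff.mp (by linarith)),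
    div_le_one (by linarith)]
  linarith

theorem lipschitzOnWith_log_closedBall_two : LipschitzOnWith 1 log (closedBall (2 : ℂ) 1) := by
  simpa using lipschitzOnWith_log (convex_closedBall _ _) one_pos fun z hz => by
    have := (abs_re_le_norm (z - 2)).trans (mem_closedBall_iff_norm.mp hz)
    simp only [sub_re, re_ofNat] at this
    push_cast
    linarith [(abs_le.mp this).1]

theorem norm_logMap_sub_center_le (hθ : 21 ≤ |θ|) (hs : s ∈ closedBall (center θ) 1) :
    ‖logMap θ s - center θ‖ ≤ 20 / (|θ| - 1) := by
  have h3 := sub_one_le_norm_add_three hs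
  calc ‖logMap θ s - center θ‖ = 5 / 2 * ‖log (ratio s) - log 2‖ := by
        rw [logMap, center, add_sub_add_right_eq_sub, ← mul_sub, norm_mul]; norm_num
    _ ≤ 5 / 2 * ‖ratio s - 2‖ := by
        gcongr
        simpa using lipschitzOnWith_log_closedBall_two.norm_sub_le
          (ratio_mem_closedBall hθ hs) (mem_closedBall_self zero_le_one)
    _ = 20 / ‖s + 3‖ := by
        rw [norm_ratio_sub_two (norm_pos_iff.mp (by linarith))]; ring
    _ ≤ 20 / (|θ| - 1) := by gcongr; linarith

theorem lipschitzOnWith_logMap (hθ : 21 ≤ |θ|) :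
    LipschitzOnWith (1 / 2) (logMap θ) (closedBall (center θ) 1) := by
  refine LipschitzOnWith.of_dist_le_mul fun s hs t ht => ?_
  have hs3 := twenty_le_norm_add_three hθ hs
  have ht3 := twenty_le_norm_add_three hθ ht
  rw [dist_eq_norm, dist_eq_norm]
  calc ‖logMap θ s - logMap θ t‖ = 5 / 2 * ‖log (ratio s) - log (ratio t)‖ := by
        rw [logMap, logMap, add_sub_add_right_eq_sub, ← mul_sub, norm_mul]; norm_num
    _ ≤ 5 / 2 * ‖ratio s - ratio t‖ := by
        gcongr
        simpa using lipschitzOnWith_log_closedBall_two.norm_sub_le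
          (ratio_mem_closedBall hθ hs) (ratio_mem_closedBall hθ ht)
    _ = 20 * ‖s - t‖ / (‖s + 3‖ * ‖t + 3‖) := by
        rw [norm_ratio_sub_ratio (norm_pos_iff.mp (by linarith)) (norm_pos_iff.mp (by linarith))]
        ring
    _ ≤ 20 * ‖s - t‖ / (20 * 20) := by gcongr
    _ ≤ (1 / 2 : ℝ≥0) * ‖s - t‖ := by
        push_cast
        linarith [norm_nonneg (s - t)]

theorem exists_isFixedPt_logMap (hθ : 21 ≤ |θ|) :
    ∃ s ∈ closedBall (center θ) 1, Function.IsFixedPt (logMap θ) s := by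
  refine exists_isFixedPt_of_lipschitzOnWith (by norm_num) isClosed_closedBall
    (nonempty_closedBall.mpr zero_le_one) (fun s hs => ?_) (lipschitzOnWith_logMap hθ)
  rw [mem_closedBall_iff_norm]
  exact (norm_logMap_sub_center_le hθ hs).trans ((div_le_one (by linarith)).mpr (by linarith))

theorem rp_eq_zero_of_isFixedPt {n : ℤ} (hθn : θ = 5 / 2 * (2 * n + 1) * Real.pi)
    (hθ : 21 ≤ |θ|) (hs : s ∈ closedBall (center θ) 1)
    (hfix : Function.IsFixedPt (logMap θ) s) : rp s = 0 := by
  have hs3 : s + 3 ≠ 0 := norm_pos_iff.mp (by linarith [twenty_le_norm_add_three hθ hs])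
  have hr : ratio s ≠ 0 := by
    intro h0
    have := ratio_mem_closedBall hθ hs
    rw [h0, mem_closedBall_iff_norm] at this
    norm_num at this
  refine rp_eq_zero_of_exp_eq hs3 ?_
  have hlin : 2 / 5 * s = log (ratio s) + (2 * n + 1) * (Real.pi * I) := by
    have h := hfix.eq
    rw [logMap, hθn] at h
    push_cast at h
    linear_combination (-2 / 5 : ℂ) * h
  rw [hlin, exp_add, exp_log hr, exp_odd_mul_pi_mul_I, mul_neg_one]

theorem re_pos_of_mem_closedBall (hs : s ∈ closedBall (center θ) 1) : 0 < s.re := by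
  have := (abs_re_le_norm (s - center θ)).trans (mem_closedBall_iff_norm.mp hs)
  rw [sub_re, center_re] at this
  linarith [(abs_le.mp this).1, Real.log_two_gt_d9]

theorem tendsto_re_of_isFixedPt {ι : Type*} {l : Filter ι} {θ : ι → ℝ} {s : ι → ℂ}
    (hθ : Tendsto (fun i => |θ i|) l atTop) (h21 : ∀ i, 21 ≤ |θ i|)
    (hs : ∀ i, s i ∈ closedBall (center (θ i)) 1)
    (hfix : ∀ i, Function.IsFixedPt (logMap (θ i)) (s i)) :
    Tendsto (fun i => (s i).re) l (𝓝 (5 / 2 * Real.log 2)) := by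
  have hclose : Tendsto (fun i => s i - center (θ i)) l (𝓝 0) :=
    squeeze_zero_norm (fun i => (hfix i).eq ▸ norm_logMap_sub_center_le (h21 i) (hs i))
      (tendsto_const_nhds.div_atTop (tendsto_atTop_add_const_right _ (-1) hθ))
  have := ((continuous_re.tendsto 0).comp hclose).const_add (5 / 2 * Real.log 2)
  rw [zero_re, add_zero] at this
  refine this.congr fun i => ?_
  simp only [Function.comp_apply, sub_re, center_re]
  ring

theorem tendsto_im_of_mem_closedBall {ι : Type*} {l : Filter ι} {θ : ι → ℝ} {s : ι → ℂ}
    (hθ : Tendsto θ l atBot) (hs : ∀ i, s i ∈ closedBall (center (θ i)) 1) :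
    Tendsto (fun i => (s i).im) l atBot :=
  tendsto_atBot_mono (fun i => by linarith [(abs_le.mp (abs_im_sub_le_one (hs i))).2])
    (tendsto_atBot_add_const_right l 1 hθ)

end QuasiPolynomialZeros

open QuasiPolynomialZeros in
/-- the quasi-polynomial `r_p(s) = (s+3) + 2(s−1)e^{-0.4 s}` has infinitely
many zeros in the open right half-plane; moreover there is a sequence of such zeros with
real parts converging to `(5/2)·ln 2` and imaginary parts tending to `-∞`. -/
theorem stmt18 :
    {s : ℂ | 0 < s.re ∧ (s + 3) + 2 * (s - 1) * Complex.exp (-(0.4 : ℂ) * s) = 0}.Infinite ∧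
    ∃ s : ℕ → ℂ,
      (∀ k, 0 < (s k).re ∧ (s k + 3) + 2 * (s k - 1) * Complex.exp (-(0.4 : ℂ) * s k) = 0) ∧
      Tendsto (fun k => (s k).re) atTop (nhds ((5 : ℝ) / 2 * Real.log 2)) ∧
      Tendsto (fun k => (s k).im) atTop atBot := by
  set θ : ℕ → ℝ := fun k => 5 / 2 * (2 * ((-k - 2 : ℤ) : ℝ) + 1) * Real.pi with hθ
  have hθ_le (k : ℕ) : θ k ≤ -21 - k := by
    simp only [hθ]; push_cast; nlinarith [Real.pi_gt_three]
  have hθ_bot : Tendsto θ atTop atBot := tendsto_atBot_mono hθ_le <|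
    tendsto_atBot_add_const_left _ (-21) <|
      tendsto_neg_atTop_atBot.comp tendsto_natCast_atTop_atTop
  have h21 (k : ℕ) : 21 ≤ |θ k| := by
    rw [abs_of_neg (by linarith [hθ_le k, k.cast_nonneg (α := ℝ)])]
    linarith [hθ_le k, k.cast_nonneg (α := ℝ)]
  choose s hs hfix using fun k => exists_isFixedPt_logMap (h21 k)
  have hzeros (k : ℕ) : 0 < (s k).re ∧ rp (s k) = 0 :=
    ⟨re_pos_of_mem_closedBall (hs k), rp_eq_zero_of_isFixedPt rfl (h21 k) (hs k) (hfix k)⟩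
  have him := tendsto_im_of_mem_closedBall hθ_bot hs
  exact ⟨Set.infinite_of_tendsto_atBot hzeros him, s, hzeros,
    tendsto_re_of_isFixedPt (tendsto_abs_atBot_atTop.comp hθ_bot) h21 hs hfix, him⟩
end
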